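/- arXiv:0910.1170 — 3 statements merged into one kernel-verified Lean document; each statement's English description precedes it below -/
import Mathlib

section
/- The function f(B) = 6(e^{-2B} - e^{-12B}) / (24 e^{-2B} - 4 e^{-12B}) is strictly monotonically increasing on (0, ∞), i.e., f'(B) > 0 for all B > 0. -/
/-- The auxiliary function `f(B) = 6(e^{-2B} - e^{-12B}) / (24 e^{-2B} - 4 e^{-12B})`
is strictly monotonically increasing on `(0, ∞)`, i.e. `f'(B) > 0` for all `B > 0`. -/
theorem f_strictMono (f : ℝ → ℝ)
    (hf : ∀ B : ℝ, f B = 6 * (Real.exp (-2 * B) - Real.exp (-12 * B)) /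
        (24 * Real.exp (-2 * B) - 4 * Real.exp (-12 * B))) :
    StrictMonoOn f (Set.Ioi (0 : ℝ)) ∧ ∀ B : ℝ, 0 < B → 0 < deriv f B := by
  have hfe : f = fun B => 6 * (Real.exp (-2 * B) - Real.exp (-12 * B)) /
        (24 * Real.exp (-2 * B) - 4 * Real.exp (-12 * B)) := funext hf
  subst hfe
  have key : ∀ B : ℝ, 0 < B →
      HasDerivAt (fun B => 6 * (Real.exp (-2 * B) - Real.exp (-12 * B)) /
        (24 * Real.exp (-2 * B) - 4 * Real.exp (-12 * B)))
      ((6 * ((-2) * Real.exp (-2 * B) - (-12) * Real.exp (-12 * B)) *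
          (24 * Real.exp (-2 * B) - 4 * Real.exp (-12 * B))
        - 6 * (Real.exp (-2 * B) - Real.exp (-12 * B)) *
          (24 * ((-2) * Real.exp (-2 * B)) - 4 * ((-12) * Real.exp (-12 * B))))
        / (24 * Real.exp (-2 * B) - 4 * Real.exp (-12 * B))^2) B := by
    intro B hB
    have h2 : HasDerivAt (fun B : ℝ => Real.exp (-2 * B)) ((-2) * Real.exp (-2 * B)) B := by
      simpa [mul_comm] using HasDerivAt.exp ((hasDerivAt_id B).const_mul (-2))
    have h12 : HasDerivAt (fun B : ℝ => Real.exp (-12 * B)) ((-12) * Real.exp (-12 * B)) B := by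
      simpa [mul_comm] using HasDerivAt.exp ((hasDerivAt_id B).const_mul (-12))
    have hden : 24 * Real.exp (-2 * B) - 4 * Real.exp (-12 * B) ≠ 0 := by
      have huv : Real.exp (-12 * B) < Real.exp (-2 * B) := Real.exp_lt_exp.2 (by linarith)
      have := Real.exp_pos (-12 * B)
      nlinarith
    exact (((h2.sub h12).const_mul 6).div
      (((h2.const_mul 24).sub (h12.const_mul 4))) hden)
  have hpos : ∀ B : ℝ, 0 < B →
      0 < (6 * ((-2) * Real.exp (-2 * B) - (-12) * Real.exp (-12 * B)) *
          (24 * Real.exp (-2 * B) - 4 * Real.exp (-12 * B))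
        - 6 * (Real.exp (-2 * B) - Real.exp (-12 * B)) *
          (24 * ((-2) * Real.exp (-2 * B)) - 4 * ((-12) * Real.exp (-12 * B))))
        / (24 * Real.exp (-2 * B) - 4 * Real.exp (-12 * B))^2 := by
    intro B hB
    set u := Real.exp (-2 * B) with hu
    set v := Real.exp (-12 * B) with hv
    have hup : 0 < u := Real.exp_pos _
    have hvp : 0 < v := Real.exp_pos _
    have huv : v < u := Real.exp_lt_exp.2 (by linarith)
    have hnum : 6 * ((-2) * u - (-12) * v) * (24 * u - 4 * v)
        - 6 * (u - v) * (24 * ((-2) * u) - 4 * ((-12) * v)) = 1200 * u * v := by ring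
    have hD : 0 < 24 * u - 4 * v := by nlinarith
    rw [hnum]
    positivity
  have hderiv : ∀ B : ℝ, 0 < B → 0 < deriv (fun B => 6 * (Real.exp (-2 * B) - Real.exp (-12 * B)) /
        (24 * Real.exp (-2 * B) - 4 * Real.exp (-12 * B))) B := by
    intro B hB
    rw [(key B hB).deriv]
    exact hpos B hB
  refine ⟨?_, hderiv⟩
  apply strictMonoOn_of_deriv_pos (convex_Ioi 0)
  · intro B hB
    exact ((key B hB).differentiableAt).continuousAt.continuousWithinAt
  · intro B hB
    rw [interior_Ioi] at hB
    exact hderiv B hB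
end

section
/- For the Taub-NUT soliton metric function A₀(ρ) = 2ρ(ρ+4l)/((ρ+2l)²) · (dr/dρ)², with r(ρ) given by r^{10} = 2l²ρ⁵(ρ+2l)²(ρ+4l), one has A₀(ρ) > 0 for all ρ > 0, and A₀ behaves asymptotically like (32/25)·(Σ r)^{-1/2} with Σ = 1/√(2l²); in particular A₀ is bounded and tends to 0 as r → ∞. -/
open Filter Real

noncomputable def fTN (l ρ : ℝ) : ℝ := 2*l^2*ρ^5*(ρ+2*l)^2*(ρ+4*l)
noncomputable def fTN' (l ρ : ℝ) : ℝ := 16*l^2*ρ^4*(ρ^3+7*l*ρ^2+15*l^2*ρ+10*l^3)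

noncomputable def GTN (t : ℝ) : ℝ :=
  (1+4*t) * (1+7*t+15*t^2+10*t^3)^2 /
    ((1+2*t)^2 * ((1+2*t)^2*(1+4*t)) ^ ((7:ℝ)/4))

lemma fTN_pos {l ρ : ℝ} (hl : 0 < l) (hρ : 0 < ρ) : 0 < fTN l ρ := by
  unfold fTN; positivity

lemma fTN'_pos {l ρ : ℝ} (hl : 0 < l) (hρ : 0 < ρ) : 0 < fTN' l ρ := by
  unfold fTN'; positivity

lemma keyTN {l ρ : ℝ} (hl : 0 < l) (hρ : 0 < ρ) :
    2*ρ*(ρ+4*l)/(ρ+2*l)^2 * (fTN' l ρ * ((1:ℝ)/10) * fTN l ρ ^ ((1:ℝ)/10 - 1))^2 *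
      ((1 / Real.sqrt (2*l^2)) * (fTN l ρ) ^ ((1:ℝ)/10)) ^ ((1:ℝ)/2)
    = 32/25 * GTN (l/ρ) := by
  have hρ0 : ρ ≠ 0 := hρ.ne'
  have hf := fTN_pos hl hρ
  have hf' := fTN'_pos hl hρ
  set t := l/ρ with ht
  have htpos : 0 < t := by rw [ht]; positivity
  set u := 1+2*t with hu_def
  set v := 1+4*t with hv_def
  set w := 1+7*t+15*t^2+10*t^3 with hw_def
  have hu : (0:ℝ) < u := by rw [hu_def]; positivity
  have hv : (0:ℝ) < v := by rw [hv_def]; positivity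
  have hw : (0:ℝ) < w := by rw [hw_def]; positivity
  have ha : ρ+2*l = ρ*u := by rw [hu_def, ht]; field_simp
  have hb : ρ+4*l = ρ*v := by rw [hv_def, ht]; field_simp
  have hfe : fTN l ρ = 2*l^2*ρ^8*(u^2*v) := by
    rw [hu_def, hv_def, ht]; unfold fTN; field_simp
  have hfe' : fTN' l ρ = 16*l^2*ρ^7*w := by
    rw [hw_def, ht]; unfold fTN'; field_simp
  have hs : (0:ℝ) < Real.sqrt (2*l^2) := Real.sqrt_pos.mpr (by positivity)
  have p1 : (fTN l ρ ^ ((1:ℝ)/10 - 1))^(40:ℕ) = ((fTN l ρ)^(36:ℕ))⁻¹ := by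
    rw [← Real.rpow_natCast (fTN l ρ ^ ((1:ℝ)/10 - 1)) 40, ← Real.rpow_mul hf.le,
      show ((1:ℝ)/10 - 1)*((40:ℕ):ℝ) = -((36:ℕ):ℝ) by push_cast; norm_num,
      Real.rpow_neg hf.le, Real.rpow_natCast]
  have p2 : (((1/Real.sqrt (2*l^2)) * fTN l ρ ^ ((1:ℝ)/10)) ^ ((1:ℝ)/2))^(20:ℕ)
      = ((Real.sqrt (2*l^2))^(10:ℕ))⁻¹ * fTN l ρ := by
    have hX : (0:ℝ) ≤ (1/Real.sqrt (2*l^2)) * fTN l ρ ^ ((1:ℝ)/10) := by positivity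
    rw [← Real.rpow_natCast (((1/Real.sqrt (2*l^2)) * fTN l ρ ^ ((1:ℝ)/10)) ^ ((1:ℝ)/2)) 20,
      ← Real.rpow_mul hX,
      show ((1:ℝ)/2)*((20:ℕ):ℝ) = ((10:ℕ):ℝ) by push_cast; norm_num,
      Real.rpow_natCast, mul_pow, div_pow, one_pow,
      ← Real.rpow_natCast (fTN l ρ ^ ((1:ℝ)/10)) 10, ← Real.rpow_mul hf.le,
      show ((1:ℝ)/10)*((10:ℕ):ℝ) = 1 by push_cast; norm_num, Real.rpow_one, one_div]
  have p3 : ((u^2*v) ^ ((7:ℝ)/4))^(20:ℕ) = (u^2*v)^(35:ℕ) := by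
    rw [← Real.rpow_natCast ((u^2*v) ^ ((7:ℝ)/4)) 20, ← Real.rpow_mul (by positivity),
      show ((7:ℝ)/4)*((20:ℕ):ℝ) = ((35:ℕ):ℝ) by push_cast; norm_num, Real.rpow_natCast]
  have p4 : (Real.sqrt (2*l^2))^(10:ℕ) = (2*l^2)^(5:ℕ) := by
    rw [show (10:ℕ) = 2*5 by norm_num, pow_mul, Real.sq_sqrt (by positivity : (0:ℝ) ≤ 2*l^2)]
  refine (pow_left_inj₀ ?_ ?_ (by norm_num : (20:ℕ) ≠ 0)).mp ?_
  · positivity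
  · simp only [GTN]
    rw [← hu_def, ← hv_def, ← hw_def]
    positivity
  · calc (2*ρ*(ρ+4*l)/(ρ+2*l)^2 * (fTN' l ρ * ((1:ℝ)/10) * fTN l ρ ^ ((1:ℝ)/10 - 1))^2 *
          ((1 / Real.sqrt (2*l^2)) * (fTN l ρ) ^ ((1:ℝ)/10)) ^ ((1:ℝ)/2))^20
        = (2*ρ*(ρ+4*l)/(ρ+2*l)^2)^20 *
            ((fTN' l ρ)^40 * ((1:ℝ)/10)^40 * (fTN l ρ ^ ((1:ℝ)/10 - 1))^40) *
            ((((1 / Real.sqrt (2*l^2)) * (fTN l ρ) ^ ((1:ℝ)/10)) ^ ((1:ℝ)/2))^20) := by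
          ring
      _ = (2*ρ*(ρ+4*l)/(ρ+2*l)^2)^20 *
            ((fTN' l ρ)^40 * ((1:ℝ)/10)^40 * ((fTN l ρ)^36)⁻¹) *
            (((Real.sqrt (2*l^2))^10)⁻¹ * fTN l ρ) := by rw [p1, p2]
      _ = (32/25 * GTN t)^20 := by
          rw [p4, hfe, hfe', ha, hb]
          simp only [GTN]
          rw [← hu_def, ← hv_def, ← hw_def]
          have pr : (32/25 * (v * w^2 / (u^2 * (u^2*v) ^ ((7:ℝ)/4))))^(20:ℕ)
              = (32/25)^20 * ((v*w^2)^20 / ((u^2)^20 * (u^2*v)^35)) := by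
            rw [mul_pow, div_pow (v*w^2) (u^2*(u^2*v) ^ ((7:ℝ)/4)) 20, mul_pow (u^2) ((u^2*v) ^ ((7:ℝ)/4)), p3]
          rw [pr]
          clear_value t u v w
          field_simp
          ring

lemma hasDerivAt_fTN (l ρ : ℝ) : HasDerivAt (fTN l) (fTN' l ρ) ρ := by
  have h0 : HasDerivAt (fun x : ℝ => x^5) (5*ρ^4) ρ := by
    simpa using hasDerivAt_pow 5 ρ
  have h1 : HasDerivAt (fun x : ℝ => 2*l^2*x^5) (2*l^2*(5*ρ^4)) ρ := h0.const_mul (2*l^2)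
  have h2 : HasDerivAt (fun x : ℝ => (x+2*l)^2) (2*(ρ+2*l)) ρ := by
    simpa using ((hasDerivAt_id ρ).add_const (2*l)).fun_pow 2
  have h3 : HasDerivAt (fun x : ℝ => x+4*l) 1 ρ := (hasDerivAt_id ρ).add_const _
  have := (h1.fun_mul h2).fun_mul h3
  refine this.congr_deriv ?_
  unfold fTN'; ring

lemma deriv_rTN {l : ℝ} (hl : 0 < l) {r : ℝ → ℝ}
    (hr : ∀ ρ : ℝ, 0 ≤ ρ →
      r ρ = (2 * l ^ 2 * ρ ^ 5 * (ρ + 2 * l) ^ 2 * (ρ + 4 * l)) ^ ((1 : ℝ) / 10))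
    {ρ : ℝ} (hρ : 0 < ρ) :
    deriv r ρ = fTN' l ρ * ((1:ℝ)/10) * fTN l ρ ^ ((1:ℝ)/10 - 1) := by
  have heq : r =ᶠ[nhds ρ] fun x => fTN l x ^ ((1:ℝ)/10) := by
    filter_upwards [Ioi_mem_nhds hρ] with x hx
    rw [hr x (le_of_lt hx)]; rfl
  rw [heq.deriv_eq]
  exact ((hasDerivAt_fTN l ρ).rpow_const (Or.inl (fTN_pos hl hρ).ne')).deriv

set_option maxHeartbeats 1600000 in
lemma boundTN {l ρ : ℝ} (hl : 0 < l) (hρ : 0 < ρ) :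
    2*ρ*(ρ+4*l)/(ρ+2*l)^2 * (fTN' l ρ * ((1:ℝ)/10) * fTN l ρ ^ ((1:ℝ)/10 - 1))^2
      ≤ 512*l^4/100 * ((2*l^2) ^ ((9:ℝ)/5))⁻¹ * 2 ^ ((8:ℝ)/5) * ((2*l) ^ ((2:ℝ)/5))⁻¹ := by
  have hρ0 : ρ ≠ 0 := hρ.ne'
  have hf := fTN_pos hl hρ
  have hf' := fTN'_pos hl hρ
  have ha : (0:ℝ) < ρ+2*l := by linarith
  have hb : (0:ℝ) < ρ+4*l := by linarith
  have hP : (0:ℝ) < ρ^3+7*l*ρ^2+15*l^2*ρ+10*l^3 := by positivity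
  have hQ : (0:ℝ) < (ρ+2*l)^2*(ρ+4*l) := by positivity
  have p1 : (fTN l ρ ^ ((1:ℝ)/10 - 1))^(40:ℕ) = ((fTN l ρ)^(36:ℕ))⁻¹ := by
    rw [← Real.rpow_natCast (fTN l ρ ^ ((1:ℝ)/10 - 1)) 40, ← Real.rpow_mul hf.le,
      show ((1:ℝ)/10 - 1)*((40:ℕ):ℝ) = -((36:ℕ):ℝ) by push_cast; norm_num,
      Real.rpow_neg hf.le, Real.rpow_natCast]
  have q1 : (((ρ+2*l)^2*(ρ+4*l)) ^ ((9:ℝ)/5))^(20:ℕ) = ((ρ+2*l)^2*(ρ+4*l))^(36:ℕ) := by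
    rw [← Real.rpow_natCast (((ρ+2*l)^2*(ρ+4*l)) ^ ((9:ℝ)/5)) 20, ← Real.rpow_mul hQ.le,
      show ((9:ℝ)/5)*((20:ℕ):ℝ) = ((36:ℕ):ℝ) by push_cast; norm_num, Real.rpow_natCast]
  have q2 : ((2*l^2) ^ ((9:ℝ)/5))^(20:ℕ) = (2*l^2)^(36:ℕ) := by
    rw [← Real.rpow_natCast ((2*l^2) ^ ((9:ℝ)/5)) 20, ← Real.rpow_mul (by positivity : (0:ℝ) ≤ 2*l^2),
      show ((9:ℝ)/5)*((20:ℕ):ℝ) = ((36:ℕ):ℝ) by push_cast; norm_num, Real.rpow_natCast]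
  have hfe : fTN l ρ = 2*l^2*ρ^5*((ρ+2*l)^2*(ρ+4*l)) := by unfold fTN; ring
  have hfe' : fTN' l ρ = 16*l^2*ρ^4*(ρ^3+7*l*ρ^2+15*l^2*ρ+10*l^3) := rfl
  -- step A : exact identity
  have stepA : 2*ρ*(ρ+4*l)/(ρ+2*l)^2 * (fTN' l ρ * ((1:ℝ)/10) * fTN l ρ ^ ((1:ℝ)/10 - 1))^2
      = (512*l^4/100 * ((2*l^2) ^ ((9:ℝ)/5))⁻¹) * ((ρ+4*l) * (((ρ+2*l)^2)⁻¹ *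
        ((ρ^3+7*l*ρ^2+15*l^2*ρ+10*l^3)^2 * ((((ρ+2*l)^2*(ρ+4*l)) ^ ((9:ℝ)/5))⁻¹)))) := by
    refine (pow_left_inj₀ ?_ ?_ (by norm_num : (20:ℕ) ≠ 0)).mp ?_
    · positivity
    · positivity
    · calc (2*ρ*(ρ+4*l)/(ρ+2*l)^2 * (fTN' l ρ * ((1:ℝ)/10) * fTN l ρ ^ ((1:ℝ)/10 - 1))^2)^20
          = (2*ρ*(ρ+4*l)/(ρ+2*l)^2)^20 *
              ((fTN' l ρ)^40 * ((1:ℝ)/10)^40 * (fTN l ρ ^ ((1:ℝ)/10 - 1))^40) := by ring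
        _ = (2*ρ*(ρ+4*l)/(ρ+2*l)^2)^20 *
              ((fTN' l ρ)^40 * ((1:ℝ)/10)^40 * ((fTN l ρ)^36)⁻¹) := by rw [p1]
        _ = ((512*l^4/100 * ((2*l^2) ^ ((9:ℝ)/5))⁻¹) * ((ρ+4*l) * (((ρ+2*l)^2)⁻¹ *
              ((ρ^3+7*l*ρ^2+15*l^2*ρ+10*l^3)^2 *
                ((((ρ+2*l)^2*(ρ+4*l)) ^ ((9:ℝ)/5))⁻¹)))))^20 := by
            have pr : ((512*l^4/100 * ((2*l^2) ^ ((9:ℝ)/5))⁻¹) * ((ρ+4*l) * (((ρ+2*l)^2)⁻¹ *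
                ((ρ^3+7*l*ρ^2+15*l^2*ρ+10*l^3)^2 *
                  ((((ρ+2*l)^2*(ρ+4*l)) ^ ((9:ℝ)/5))⁻¹)))))^20
                = (512*l^4/100)^20 * (((2*l^2) ^ ((9:ℝ)/5))^(20:ℕ))⁻¹ * ((ρ+4*l)^20 *
                  ((((ρ+2*l)^2)^20)⁻¹ * (((ρ^3+7*l*ρ^2+15*l^2*ρ+10*l^3)^2)^20 *
                    (((((ρ+2*l)^2*(ρ+4*l)) ^ ((9:ℝ)/5))^(20:ℕ))⁻¹)))) := by
              rw [mul_pow, mul_pow, mul_pow, mul_pow, mul_pow, inv_pow, inv_pow, inv_pow]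
            rw [pr, q1, q2, hfe, hfe']
            obtain ⟨a, hA⟩ : ∃ a, ρ+2*l = a := ⟨_, rfl⟩
            obtain ⟨b, hB⟩ : ∃ b, ρ+4*l = b := ⟨_, rfl⟩
            obtain ⟨P, hPP⟩ : ∃ P, ρ^3+7*l*ρ^2+15*l^2*ρ+10*l^3 = P := ⟨_, rfl⟩
            rw [hA] at ha ⊢
            rw [hB] at hb ⊢
            rw [hPP] at hP ⊢
            field_simp
            ring
  rw [stepA]
  -- chain of inequalities
  have c1 : (ρ^3+7*l*ρ^2+15*l^2*ρ+10*l^3)^2 * ((((ρ+2*l)^2*(ρ+4*l)) ^ ((9:ℝ)/5))⁻¹)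
      ≤ ((ρ+2*l)^2*(ρ+4*l)) ^ ((1:ℝ)/5) := by
    have hPQ : ρ^3+7*l*ρ^2+15*l^2*ρ+10*l^3 ≤ (ρ+2*l)^2*(ρ+4*l) := by
      have e : (ρ+2*l)^2*(ρ+4*l) = ρ^3+7*l*ρ^2+15*l^2*ρ+10*l^3 + (l*ρ^2+5*l^2*ρ+6*l^3) := by ring
      have e2 : (0:ℝ) ≤ l*ρ^2+5*l^2*ρ+6*l^3 := by positivity
      linarith
    calc (ρ^3+7*l*ρ^2+15*l^2*ρ+10*l^3)^2 * ((((ρ+2*l)^2*(ρ+4*l)) ^ ((9:ℝ)/5))⁻¹)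
        ≤ ((ρ+2*l)^2*(ρ+4*l))^2 * ((((ρ+2*l)^2*(ρ+4*l)) ^ ((9:ℝ)/5))⁻¹) := by
          exact mul_le_mul_of_nonneg_right (pow_le_pow_left₀ hP.le hPQ 2) (by positivity)
      _ = ((ρ+2*l)^2*(ρ+4*l)) ^ ((1:ℝ)/5) := by
          rw [← Real.rpow_natCast ((ρ+2*l)^2*(ρ+4*l)) 2, ← Real.rpow_neg hQ.le,
            ← Real.rpow_add hQ]
          norm_num
  have hK' : (0:ℝ) < 512*l^4/100 * ((2*l^2) ^ ((9:ℝ)/5))⁻¹ := by positivity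
  have e3 : (ρ+4*l) * (((ρ+4*l)^3) ^ ((1:ℝ)/5)) = (ρ+4*l) ^ ((8:ℝ)/5) := by
    rw [← Real.rpow_natCast (ρ+4*l) 3, ← Real.rpow_mul hb.le]
    nth_rewrite 1 [← Real.rpow_one (ρ+4*l)]
    rw [← Real.rpow_add hb]
    norm_num
  have e4 : (ρ+2*l) ^ ((8:ℝ)/5) * (((ρ+2*l)^2)⁻¹) = ((ρ+2*l) ^ ((2:ℝ)/5))⁻¹ := by
    rw [← Real.rpow_natCast (ρ+2*l) 2, ← Real.rpow_neg ha.le, ← Real.rpow_add ha,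
      ← Real.rpow_neg ha.le]
    norm_num
  have e4' : (2*(ρ+2*l)) ^ ((8:ℝ)/5) * (((ρ+2*l)^2)⁻¹)
      = 2 ^ ((8:ℝ)/5) * (((ρ+2*l) ^ ((2:ℝ)/5))⁻¹) := by
    rw [Real.mul_rpow (by norm_num : (0:ℝ) ≤ 2) ha.le, mul_assoc, e4]
  have hQb : (ρ+2*l)^2*(ρ+4*l) ≤ (ρ+4*l)^3 := by
    have e : (ρ+4*l)^3 = (ρ+2*l)^2*(ρ+4*l) + (ρ+4*l)*(4*l*ρ+12*l^2) := by ring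
    have e2 : (0:ℝ) ≤ (ρ+4*l)*(4*l*ρ+12*l^2) := by positivity
    linarith
  calc (512*l^4/100 * ((2*l^2) ^ ((9:ℝ)/5))⁻¹) * ((ρ+4*l) * (((ρ+2*l)^2)⁻¹ *
        ((ρ^3+7*l*ρ^2+15*l^2*ρ+10*l^3)^2 * ((((ρ+2*l)^2*(ρ+4*l)) ^ ((9:ℝ)/5))⁻¹))))
      ≤ (512*l^4/100 * ((2*l^2) ^ ((9:ℝ)/5))⁻¹) * ((ρ+4*l) * (((ρ+2*l)^2)⁻¹ *
        (((ρ+2*l)^2*(ρ+4*l)) ^ ((1:ℝ)/5)))) := by gcongr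
    _ ≤ (512*l^4/100 * ((2*l^2) ^ ((9:ℝ)/5))⁻¹) * ((ρ+4*l) * (((ρ+2*l)^2)⁻¹ *
        (((ρ+4*l)^3) ^ ((1:ℝ)/5)))) := by
        gcongr <;> first | positivity | exact hQb | linarith
    _ = (512*l^4/100 * ((2*l^2) ^ ((9:ℝ)/5))⁻¹) * (((ρ+4*l) * (((ρ+4*l)^3) ^ ((1:ℝ)/5))) *
        (((ρ+2*l)^2)⁻¹)) := by ring
    _ = (512*l^4/100 * ((2*l^2) ^ ((9:ℝ)/5))⁻¹) * ((ρ+4*l) ^ ((8:ℝ)/5) * (((ρ+2*l)^2)⁻¹)) := by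
        rw [e3]
    _ ≤ (512*l^4/100 * ((2*l^2) ^ ((9:ℝ)/5))⁻¹) * ((2*(ρ+2*l)) ^ ((8:ℝ)/5) * (((ρ+2*l)^2)⁻¹)) := by
        gcongr <;> first | positivity | linarith
    _ = (512*l^4/100 * ((2*l^2) ^ ((9:ℝ)/5))⁻¹) * (2 ^ ((8:ℝ)/5) * (((ρ+2*l) ^ ((2:ℝ)/5))⁻¹)) := by
        rw [e4']
    _ ≤ (512*l^4/100 * ((2*l^2) ^ ((9:ℝ)/5))⁻¹) * (2 ^ ((8:ℝ)/5) * (((2*l) ^ ((2:ℝ)/5))⁻¹)) := by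
        gcongr <;> first | positivity | linarith
    _ = 512*l^4/100 * ((2*l^2) ^ ((9:ℝ)/5))⁻¹ * 2 ^ ((8:ℝ)/5) * ((2*l) ^ ((2:ℝ)/5))⁻¹ := by ring


/-- For the 6+1 dimensional Taub-NUT soliton with `l > 0` and
`r(ρ)^{10} = 2l²ρ⁵(ρ+2l)²(ρ+4l)`, the metric function
`A₀(ρ) = 2ρ(ρ+4l)/(ρ+2l)² · (dr/dρ)²` is strictly positive for all `ρ > 0`,
behaves asymptotically like `(32/25)·(Σ r)^{-1/2}` with `Σ = 1/√(2l²)`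
(i.e. `A₀(ρ) · (Σ r(ρ))^{1/2} → 32/25`); in particular `A₀` is bounded
on `[0,∞)` and tends to `0` as `ρ → ∞` (equivalently as `r → ∞`). -/
theorem A0_properties (l : ℝ) (hl : 0 < l)
    (r A₀ : ℝ → ℝ)
    (hr : ∀ ρ : ℝ, 0 ≤ ρ →
      r ρ = (2 * l ^ 2 * ρ ^ 5 * (ρ + 2 * l) ^ 2 * (ρ + 4 * l)) ^ ((1 : ℝ) / 10))
    (hA₀ : ∀ ρ : ℝ, 0 < ρ →
      A₀ ρ = 2 * ρ * (ρ + 4 * l) / (ρ + 2 * l) ^ 2 * (deriv r ρ) ^ 2) :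
    (∀ ρ : ℝ, 0 < ρ → 0 < A₀ ρ) ∧
    Tendsto (fun ρ => A₀ ρ * ((1 / Real.sqrt (2 * l ^ 2)) * r ρ) ^ ((1 : ℝ) / 2))
      atTop (nhds (32 / 25)) ∧
    (∃ C : ℝ, ∀ ρ : ℝ, 0 ≤ ρ → A₀ ρ ≤ C) ∧
    Tendsto A₀ atTop (nhds 0) := by
  have hr' : ∀ ρ : ℝ, 0 ≤ ρ → r ρ = fTN l ρ ^ ((1:ℝ)/10) := fun ρ hρ => by
    rw [hr ρ hρ]; rfl
  have hAeq : ∀ ρ : ℝ, 0 < ρ → A₀ ρ =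
      2*ρ*(ρ+4*l)/(ρ+2*l)^2 * (fTN' l ρ * ((1:ℝ)/10) * fTN l ρ ^ ((1:ℝ)/10 - 1))^2 := by
    intro ρ hρ
    rw [hA₀ ρ hρ, deriv_rTN hl hr hρ]
  -- part 1 : positivity
  have part1 : ∀ ρ : ℝ, 0 < ρ → 0 < A₀ ρ := by
    intro ρ hρ
    have hf := fTN_pos hl hρ
    have hf' := fTN'_pos hl hρ
    rw [hAeq ρ hρ]
    have hd : 0 < fTN' l ρ * ((1:ℝ)/10) * fTN l ρ ^ ((1:ℝ)/10 - 1) := by positivity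
    positivity
  -- key pointwise identity
  have hE : ∀ ρ : ℝ, 0 < ρ →
      A₀ ρ * ((1 / Real.sqrt (2 * l ^ 2)) * r ρ) ^ ((1:ℝ)/2) = 32/25 * GTN (l/ρ) := by
    intro ρ hρ
    rw [hAeq ρ hρ, hr' ρ hρ.le]
    exact keyTN hl hρ
  -- continuity of GTN at 0
  have hGcont : ContinuousAt GTN 0 := by
    unfold GTN
    apply ContinuousAt.div
    · fun_prop
    · exact ((continuousAt_const.add (continuousAt_const.mul continuousAt_id)).pow 2).mul
        ((((continuousAt_const.add (continuousAt_const.mul continuousAt_id)).pow 2).mul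
          (continuousAt_const.add (continuousAt_const.mul continuousAt_id))).rpow_const
            (Or.inr (by norm_num)))
    · norm_num
  have hG0 : GTN 0 = 1 := by
    unfold GTN; norm_num
  -- part 2 : the limit 32/25
  have hto0 : Tendsto (fun ρ : ℝ => l/ρ) atTop (nhds 0) :=
    tendsto_const_nhds.div_atTop tendsto_id
  have h2' : Tendsto (fun ρ : ℝ => 32/25 * GTN (l/ρ)) atTop (nhds (32/25)) := by
    have h := (hGcont.tendsto.comp hto0).const_mul (32/25 : ℝ)
    rw [hG0, mul_one] at h
    exact h
  have hee : (fun ρ : ℝ => 32/25 * GTN (l/ρ)) =ᶠ[atTop]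
      (fun ρ => A₀ ρ * ((1 / Real.sqrt (2 * l ^ 2)) * r ρ) ^ ((1:ℝ)/2)) := by
    filter_upwards [eventually_gt_atTop 0] with ρ hρ
    exact (hE ρ hρ).symm
  have part2 : Tendsto (fun ρ => A₀ ρ * ((1 / Real.sqrt (2 * l ^ 2)) * r ρ) ^ ((1:ℝ)/2))
      atTop (nhds (32/25)) := Tendsto.congr' hee h2'
  -- part 3 : boundedness
  have part3 : ∃ C : ℝ, ∀ ρ : ℝ, 0 ≤ ρ → A₀ ρ ≤ C := by
    refine ⟨max (512*l^4/100 * ((2*l^2) ^ ((9:ℝ)/5))⁻¹ * 2 ^ ((8:ℝ)/5) *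
      ((2*l) ^ ((2:ℝ)/5))⁻¹) (A₀ 0), fun ρ hρ => ?_⟩
    rcases eq_or_lt_of_le hρ with h0 | hρpos
    · rw [← h0]; exact le_max_right _ _
    · refine le_trans ?_ (le_max_left _ _)
      rw [hAeq ρ hρpos]
      exact boundTN hl hρpos
  -- part 4 : tendsto 0
  have hfT : Tendsto (fTN l) atTop atTop := by
    apply tendsto_atTop_mono' atTop ?_
      (Tendsto.const_mul_atTop (by positivity : (0:ℝ) < 2*l^2) tendsto_id)
    filter_upwards [eventually_ge_atTop (1:ℝ)] with ρ hρ1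
    have u1 : (1:ℝ) ≤ ρ+2*l := by linarith
    have u2 : (1:ℝ) ≤ ρ+4*l := by linarith
    have u3 : (1:ℝ) ≤ (ρ+2*l)^2*(ρ+4*l) := by nlinarith
    have u4 : ρ ≤ ρ^5 := le_self_pow₀ (by linarith) (by norm_num)
    have e : fTN l ρ = (2*l^2*ρ^5)*((ρ+2*l)^2*(ρ+4*l)) := by unfold fTN; ring
    calc 2*l^2*(id ρ) = 2*l^2*ρ := rfl
      _ ≤ 2*l^2*ρ^5 := by nlinarith
      _ ≤ (2*l^2*ρ^5)*((ρ+2*l)^2*(ρ+4*l)) :=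
          le_mul_of_one_le_right (by positivity) u3
      _ = fTN l ρ := e.symm
  have hrT : Tendsto r atTop atTop := by
    apply Tendsto.congr' ?_ ((tendsto_rpow_atTop
      (by norm_num : (0:ℝ) < (1:ℝ)/10)).comp hfT)
    filter_upwards [eventually_ge_atTop (0:ℝ)] with ρ hρ
    exact (hr' ρ hρ).symm
  have hXT : Tendsto (fun ρ => ((1 / Real.sqrt (2 * l ^ 2)) * r ρ) ^ ((1:ℝ)/2))
      atTop atTop := by
    have hs : (0:ℝ) < 1 / Real.sqrt (2*l^2) := by
      have : (0:ℝ) < Real.sqrt (2*l^2) := Real.sqrt_pos.mpr (by positivity)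
      positivity
    exact (tendsto_rpow_atTop (by norm_num : (0:ℝ) < (1:ℝ)/2)).comp
      (hrT.const_mul_atTop hs)
  have hinv : Tendsto (fun ρ => (((1 / Real.sqrt (2 * l ^ 2)) * r ρ) ^ ((1:ℝ)/2))⁻¹)
      atTop (nhds 0) := hXT.inv_tendsto_atTop
  have hprod := part2.mul hinv
  rw [mul_zero] at hprod
  have part4 : Tendsto A₀ atTop (nhds 0) := by
    apply Tendsto.congr' ?_ hprod
    filter_upwards [eventually_gt_atTop (0:ℝ)] with ρ hρ
    have hfpos := fTN_pos hl hρ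
    have hXpos : 0 < ((1 / Real.sqrt (2 * l ^ 2)) * r ρ) ^ ((1:ℝ)/2) := by
      apply Real.rpow_pos_of_pos
      rw [hr' ρ hρ.le]
      have : (0:ℝ) < Real.sqrt (2*l^2) := Real.sqrt_pos.mpr (by positivity)
      positivity
    rw [mul_assoc, mul_inv_cancel₀ hXpos.ne', mul_one]
  exact ⟨part1, part2, part3, part4⟩
end

section
/- Suppose B: [τ₀, ∞) → ℝ is monotonically increasing and bounded above by a finite limit L, B' → 0, and at every τ where B'(τ) < f(B(τ)) one has B''(τ) > 0, where f is continuous with f(L) = ξ > 0. Then a contradiction arises: B' cannot converge to 0. Hence B(τ) → ∞. -/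
open Filter

/-- Suppose `B : [τ₀, ∞) → ℝ` is monotonically increasing and bounded above with finite
limit `L` (so `B → L`), `B' → 0`, and at every `τ ≥ τ₀` where `B'(τ) < f(B(τ))` one has
`B''(τ) > 0`, where `f` is continuous with `f(L) = ξ > 0` and `B' > 0`. Then a
contradiction arises: `B'` cannot converge to `0`. (Hence, in the application, `B → ∞`.) -/
theorem B_cannot_have_finite_limit (τ₀ L ξ : ℝ) (B f : ℝ → ℝ)
    (hmono : MonotoneOn B (Set.Ici τ₀))
    (hlim : Tendsto B atTop (nhds L))
    (hbdd : ∀ τ : ℝ, τ₀ ≤ τ → B τ ≤ L)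
    (hpos : ∀ τ : ℝ, τ₀ ≤ τ → 0 < deriv B τ)
    (hB' : Tendsto (deriv B) atTop (nhds 0))
    (hf : Continuous f)
    (hfL : f L = ξ)
    (hξ : 0 < ξ)
    (hconvex : ∀ τ : ℝ, τ₀ ≤ τ → deriv B τ < f (B τ) → 0 < deriv (deriv B) τ) :
    False := by
  -- f ∘ B tends to ξ
  have hfB : Tendsto (fun τ => f (B τ)) atTop (nhds ξ) := by
    have := (hf.continuousAt (x := L)).tendsto.comp hlim
    rwa [hfL] at this
  -- eventually f (B τ) > ξ/2 and deriv B τ < ξ/2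
  have h1 : ∀ᶠ τ in atTop, ξ / 2 < f (B τ) :=
    hfB.eventually (eventually_gt_nhds (by linarith))
  have h2 : ∀ᶠ τ in atTop, deriv B τ < ξ / 2 :=
    hB'.eventually (eventually_lt_nhds (by linarith))
  have h3 : ∀ᶠ τ in atTop, τ₀ ≤ τ := eventually_ge_atTop τ₀
  obtain ⟨T, hT⟩ := ((h1.and h2).and h3).exists_forall_of_atTop
  -- On [T, ∞), deriv (deriv B) > 0
  have hdd : ∀ τ, T ≤ τ → 0 < deriv (deriv B) τ := by
    intro τ hτ
    obtain ⟨⟨ha, hb⟩, hc⟩ := hT τ hτ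
    exact hconvex τ hc (by linarith)
  -- deriv B is differentiable on [T, ∞)
  have hdiff : ∀ τ, T ≤ τ → DifferentiableAt ℝ (deriv B) τ := by
    intro τ hτ
    exact differentiableAt_of_deriv_ne_zero (ne_of_gt (hdd τ hτ))
  -- deriv B strictly monotone on [T, ∞)
  have hsm : StrictMonoOn (deriv B) (Set.Ici T) := by
    apply strictMonoOn_of_deriv_pos (convex_Ici T)
    · intro τ hτ
      exact ((hdiff τ hτ).continuousAt).continuousWithinAt
    · intro τ hτ
      rw [interior_Ici] at hτ
      exact hdd τ (le_of_lt hτ)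
  -- for τ ≥ T+1, deriv B (T+1) ≤ deriv B τ
  have hev : ∀ᶠ τ in atTop, deriv B (T + 1) ≤ deriv B τ := by
    filter_upwards [eventually_ge_atTop (T + 1)] with τ hτ
    exact (hsm.monotoneOn) (by simp : T + 1 ∈ Set.Ici T)
      (le_trans (by linarith) hτ : T ≤ τ) hτ
  have hle : deriv B (T + 1) ≤ 0 := ge_of_tendsto hB' hev
  have hτ₀ : τ₀ ≤ T + 1 := le_trans (hT T le_rfl).2 (by linarith)
  linarith [hpos (T + 1) hτ₀]
end
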